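/- For β > 1 and any n ≥ 1, among every n+1 consecutive cylinders of order n (ordered from left to right in [0,1)), at least one is full. -/

import Mathlib

open MeasureTheory Filter Real Set

noncomputable section

/-- The β-transformation `x ↦ βx mod 1`. -/
def bT (β x : ℝ) : ℝ := Int.fract (β * x)

/-- The digit `ε_{j+1}(x, β) = ⌊β T_β^j x⌋` (0-indexed). -/
def dig (β x : ℝ) (j : ℕ) : ℤ := ⌊β * (bT β)^[j] x⌋

/-- A finite word is admissible if it is the initial digit string of some `x ∈ [0,1)`. -/
def Adm (β : ℝ) (w : List ℤ) : Prop :=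
  ∃ x ∈ Set.Ico (0:ℝ) 1, ∀ i : Fin w.length, dig β x i = w.get i

/-- The set `Σ_β^n` of admissible words of length `n`. -/
def SigmaB (β : ℝ) (n : ℕ) : Set (List ℤ) := {w | w.length = n ∧ Adm β w}

/-- The cylinder of a word. -/
def cyl (β : ℝ) (w : List ℤ) : Set ℝ :=
  {x | x ∈ Set.Ico (0:ℝ) 1 ∧ ∀ i : Fin w.length, dig β x i = w.get i}

/-- The length of a cylinder. -/
def cylLen (β : ℝ) (w : List ℤ) : ℝ := (volume (cyl β w)).toReal

/-- A word/cylinder is full if the cylinder has maximal length `β^{-n}`. -/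
def IsFull (β : ℝ) (w : List ℤ) : Prop := cylLen β w = (β ^ w.length)⁻¹

/-- The left endpoint `Σ_j ε_j β^{-j}` of the cylinder of a word. -/
def leftpt (β : ℝ) (w : List ℤ) : ℝ :=
  ∑ i : Fin w.length, (w.get i : ℝ) / β ^ ((i : ℕ) + 1)

/-- Birkhoff (ergodic) sum `S_n f(x)`. -/
def birk (β : ℝ) (f : ℝ → ℝ) (n : ℕ) (x : ℝ) : ℝ :=
  ∑ j ∈ Finset.range n, f ((bT β)^[j] x)

/-- The digit sequence of `1`. -/
def eps1 (β : ℝ) (j : ℕ) : ℤ := ⌊β * (bT β)^[j] 1⌋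

/-- The infinite β-expansion of `1`. -/
def epsStar (β : ℝ) : ℕ → ℤ := by
  classical
  exact
  if h : ∃ m, eps1 β m ≠ 0 ∧ ∀ k, m < k → eps1 β k = 0 then
    fun j =>
      if j % (h.choose + 1) = h.choose then eps1 β h.choose - 1
      else eps1 β (j % (h.choose + 1))
  else eps1 β

/-- Strict lexicographic order on integer sequences. -/
def lexLt (a b : ℕ → ℤ) : Prop := ∃ k, (∀ j, j < k → a j = b j) ∧ a k < b k

/-- The partition function `Σ_{w ∈ Σ_β^n} sup_{y ∈ I_n(w)} e^{S_n g(y)}`. -/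
def presSum (β : ℝ) (g : ℝ → ℝ) (n : ℕ) : ℝ :=
  ∑' w : SigmaB β n, ⨆ y ∈ cyl β (w : List ℤ), Real.exp (birk β g n y)

/-- The pressure function `P(g, T_β)`. -/
def pressure (β : ℝ) (g : ℝ → ℝ) : ℝ :=
  limUnder Filter.atTop fun n : ℕ => Real.log (presSum β g n) / n

end

/-!
An admissible cylinder of order `n` is an interval `[leftpt w, rightpt w)` of length at most
`β⁻ⁿ`, and appending a digit `a` to `u` cuts `[leftpt u, rightpt u)` at
`leftpt (u ++ [a]) + β⁻ⁿ⁻¹`, so a cylinder that is not full ends where its parent ends.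
Given `n + 2` consecutive non-full cylinders of order `n + 1`, the left endpoint of each but the
first is the right endpoint of the previous parent, so by tiling it is also the left endpoint of
its own parent: the last `n + 1` parents are consecutive, and each coincides with its non-full
child, hence is not full either. Induction on `n` ends at the full cylinder `[0, 1)`.
-/

noncomputable def rightpt (β : ℝ) (w : List ℤ) : ℝ := leftpt β w + cylLen β w

section

variable {β : ℝ}

theorem mem_cyl_iff {w : List ℤ} {x : ℝ} :
    x ∈ cyl β w ↔ x ∈ Ico (0 : ℝ) 1 ∧ ∀ i < w.length, dig β x i = w.getD i 0 := by
  simp only [cyl, mem_ofPred_eq, Fin.forall_iff, List.get_eq_getElem]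
  exact and_congr_right fun _ => forall₂_congr fun i hi => by rw [List.getD_eq_getElem _ _ hi]

theorem adm_iff_nonempty_cyl {w : List ℤ} : Adm β w ↔ (cyl β w).Nonempty := by
  simp [Adm, cyl, Set.Nonempty]

theorem mem_cyl_append {u : List ℤ} {a : ℤ} {x : ℝ} :
    x ∈ cyl β (u ++ [a]) ↔ x ∈ cyl β u ∧ dig β x u.length = a := by
  simp only [mem_cyl_iff, List.length_append, List.length_singleton, Nat.forall_lt_succ_right,
    and_assoc]
  exact and_congr_right fun _ =>
    and_congr (forall₂_congr fun i hi => by rw [List.getD_append _ _ _ _ hi]) (by simp)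

theorem cyl_anti {u v : List ℤ} (h : u <+: v) : cyl β v ⊆ cyl β u := by
  intro x hx
  rw [mem_cyl_iff] at hx ⊢
  refine ⟨hx.1, fun i hi => ?_⟩
  rw [hx.2 i (hi.trans_le h.length_le), List.getD_eq_getElem _ _ hi, h.getElem hi,
    List.getD_eq_getElem]

theorem Adm.of_prefix {u v : List ℤ} (hv : Adm β v) (h : u <+: v) : Adm β u :=
  adm_iff_nonempty_cyl.2 ((adm_iff_nonempty_cyl.1 hv).mono (cyl_anti h))

theorem eq_of_mem_cyl {u v : List ℤ} {x : ℝ} (hu : x ∈ cyl β u) (hv : x ∈ cyl β v)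
    (h : u.length = v.length) : u = v := by
  rw [mem_cyl_iff] at hu hv
  refine List.ext_getElem h fun i h₁ h₂ => ?_
  rw [← List.getD_eq_getElem _ 0, ← List.getD_eq_getElem _ 0, ← hu.2 i h₁, hv.2 i h₂]

theorem cyl_nil : cyl β [] = Ico 0 1 := by
  ext x
  simp [mem_cyl_iff]

theorem isFull_nil : IsFull β [] := by
  simp [IsFull, cylLen, cyl_nil]

theorem leftpt_nil : leftpt β [] = 0 := by
  simp [leftpt]

theorem leftpt_eq_sum_range (w : List ℤ) :
    leftpt β w = ∑ i ∈ Finset.range w.length, (w.getD i 0 : ℝ) / β ^ (i + 1) := by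
  rw [leftpt, ← Fin.sum_univ_eq_sum_range (fun i => (w.getD i 0 : ℝ) / β ^ (i + 1))]
  simp

theorem leftpt_append (u : List ℤ) (a : ℤ) :
    leftpt β (u ++ [a]) = leftpt β u + a / β ^ (u.length + 1) := by
  rw [leftpt_eq_sum_range, leftpt_eq_sum_range, List.length_append, List.length_singleton,
    Finset.sum_range_succ]
  congr 1
  · exact Finset.sum_congr rfl fun i hi => by rw [List.getD_append _ _ _ _ (Finset.mem_range.1 hi)]
  · simp

theorem bT_iterate_nonneg {x : ℝ} (hx : 0 ≤ x) : ∀ j, 0 ≤ (bT β)^[j] x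
  | 0 => hx
  | j + 1 => by rw [Function.iterate_succ_apply']; exact Int.fract_nonneg _

theorem nonneg_of_adm_append (hβ : 0 ≤ β) {u : List ℤ} {a : ℤ} (h : Adm β (u ++ [a])) :
    0 ≤ a := by
  obtain ⟨x, hx⟩ := adm_iff_nonempty_cyl.1 h
  obtain ⟨hxu, rfl⟩ := mem_cyl_append.1 hx
  exact Int.floor_nonneg.2 (mul_nonneg hβ (bT_iterate_nonneg hxu.1.1 _))

theorem bT_iterate_of_mem_cyl (hβ : β ≠ 0) {w : List ℤ} {x : ℝ} (hx : x ∈ cyl β w) :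
    (bT β)^[w.length] x = β ^ w.length * (x - leftpt β w) := by
  induction w using List.reverseRecOn with
  | nil => simp [leftpt]
  | append_singleton u a ih =>
    obtain ⟨hxu, hd⟩ := mem_cyl_append.1 hx
    rw [dig, ih hxu] at hd
    rw [List.length_append, List.length_singleton, Function.iterate_succ_apply', ih hxu, bT,
      Int.fract, hd, leftpt_append]
    field_simp
    ring

theorem dig_length_of_mem_cyl (hβ : β ≠ 0) {w : List ℤ} {x : ℝ} (hx : x ∈ cyl β w) :
    dig β x w.length = ⌊β ^ (w.length + 1) * (x - leftpt β w)⌋ := by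
  rw [dig, bT_iterate_of_mem_cyl hβ hx, ← mul_assoc, ← pow_succ']

theorem cyl_append_eq_inter (hβ : 0 < β) (u : List ℤ) (a : ℤ) :
    cyl β (u ++ [a]) = cyl β u ∩
      Ico (leftpt β (u ++ [a])) (leftpt β (u ++ [a]) + (β ^ (u.length + 1))⁻¹) := by
  ext x
  rw [mem_cyl_append, mem_inter_iff, and_congr_right_iff]
  intro hx
  have hpow : 0 < β ^ (u.length + 1) := pow_pos hβ _
  have hsplit : leftpt β u + a / β ^ (u.length + 1) + (β ^ (u.length + 1))⁻¹ =
      leftpt β u + (a + 1) / β ^ (u.length + 1) := by ring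
  rw [dig_length_of_mem_cyl hβ.ne' hx, Int.floor_eq_iff, leftpt_append, hsplit, mem_Ico,
    ← le_sub_iff_add_le', ← sub_lt_iff_lt_add' (a := x), div_le_iff₀ hpow, lt_div_iff₀ hpow,
    mul_comm (x - _)]

theorem cyl_append_eq_Ico (hβ : 0 < β) {u : List ℤ} {a : ℤ} {r : ℝ}
    (hu : cyl β u = Ico (leftpt β u) r) (ha : 0 ≤ a) :
    cyl β (u ++ [a]) =
      Ico (leftpt β (u ++ [a])) (min r (leftpt β (u ++ [a]) + (β ^ (u.length + 1))⁻¹)) := by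
  have hle : leftpt β u ≤ leftpt β (u ++ [a]) := by
    rw [leftpt_append]
    exact le_add_of_nonneg_right (div_nonneg (Int.cast_nonneg_iff.mpr ha) (pow_pos hβ _).le)
  rw [cyl_append_eq_inter hβ, hu, Ico_inter_Ico, max_eq_right hle]

theorem rightpt_eq_of_cyl_eq_Ico {w : List ℤ} {r : ℝ} (h : cyl β w = Ico (leftpt β w) r)
    (hw : Adm β w) : rightpt β w = r := by
  have hlt : leftpt β w < r := nonempty_Ico.1 (h ▸ adm_iff_nonempty_cyl.1 hw)
  rw [rightpt, cylLen, h, Real.volume_Ico, ENNReal.toReal_ofReal (sub_nonneg.2 hlt.le)]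
  ring

theorem cyl_eq_Ico (hβ : 0 < β) {w : List ℤ} (hw : Adm β w) :
    cyl β w = Ico (leftpt β w) (rightpt β w) := by
  induction w using List.reverseRecOn with
  | nil =>
    have h : cyl β [] = Ico (leftpt β []) 1 := by rw [cyl_nil, leftpt_nil]
    rwa [rightpt_eq_of_cyl_eq_Ico h hw]
  | append_singleton u a ih =>
    have h := cyl_append_eq_Ico hβ (ih (hw.of_prefix (List.prefix_append _ _)))
      (nonneg_of_adm_append hβ.le hw)
    rwa [rightpt_eq_of_cyl_eq_Ico h hw]

theorem rightpt_append (hβ : 0 < β) {u : List ℤ} {a : ℤ} (hw : Adm β (u ++ [a])) :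
    rightpt β (u ++ [a]) =
      min (rightpt β u) (leftpt β (u ++ [a]) + (β ^ (u.length + 1))⁻¹) :=
  rightpt_eq_of_cyl_eq_Ico (cyl_append_eq_Ico hβ
    (cyl_eq_Ico hβ (hw.of_prefix (List.prefix_append _ _))) (nonneg_of_adm_append hβ.le hw)) hw

theorem leftpt_lt_rightpt (hβ : 0 < β) {w : List ℤ} (hw : Adm β w) :
    leftpt β w < rightpt β w :=
  nonempty_Ico.1 (cyl_eq_Ico hβ hw ▸ adm_iff_nonempty_cyl.1 hw)

theorem leftpt_mem_cyl (hβ : 0 < β) {w : List ℤ} (hw : Adm β w) : leftpt β w ∈ cyl β w := by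
  rw [cyl_eq_Ico hβ hw]
  exact ⟨le_rfl, leftpt_lt_rightpt hβ hw⟩

theorem leftpt_eq_of_rightpt_mem_cyl (hβ : 0 < β) {u v : List ℤ} (hu : Adm β u)
    (hv : Adm β v) (hl : u.length = v.length) (h : rightpt β u ∈ cyl β v) :
    leftpt β v = rightpt β u := by
  have hne : u ≠ v := by
    rintro rfl
    rw [cyl_eq_Ico hβ hu] at h
    exact lt_irrefl _ h.2
  rw [cyl_eq_Ico hβ hv] at h
  refine le_antisymm h.1 (not_lt.1 fun hlt => hne ?_)
  refine eq_of_mem_cyl (β := β) (x := max (leftpt β u) (leftpt β v)) ?_ ?_ hl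
  · rw [cyl_eq_Ico hβ hu]
    exact ⟨le_max_left _ _, max_lt (leftpt_lt_rightpt hβ hu) hlt⟩
  · rw [cyl_eq_Ico hβ hv]
    exact ⟨le_max_right _ _,
      max_lt ((leftpt_lt_rightpt hβ hu).trans h.2) (leftpt_lt_rightpt hβ hv)⟩

theorem rightpt_dropLast (hβ : 0 < β) {w : List ℤ} (hw : Adm β w) (hfull : ¬IsFull β w) :
    rightpt β w.dropLast = rightpt β w := by
  rcases List.eq_nil_or_concat w with rfl | ⟨u, a, rfl⟩
  · rfl
  simp only [List.concat_eq_append, List.dropLast_concat] at hw hfull ⊢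
  rw [rightpt_append hβ hw, min_eq_left]
  by_contra! h
  have hr := rightpt_append hβ hw
  rw [min_eq_right h.le, rightpt] at hr
  exact hfull (by rw [IsFull, List.length_append, List.length_singleton]; linarith)

theorem leftpt_dropLast_of_consecutive (hβ : 0 < β) {u v : List ℤ}
    (hl : u.length = v.length) (hu : Adm β u) (hv : Adm β v) (hfull : ¬IsFull β u)
    (hcons : leftpt β v = rightpt β u) :
    leftpt β v.dropLast = leftpt β v := by
  have hr := rightpt_dropLast hβ hu hfull
  have hmem : rightpt β u.dropLast ∈ cyl β v.dropLast :=
    cyl_anti (List.dropLast_prefix v) (hr ▸ hcons ▸ leftpt_mem_cyl hβ hv)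
  rw [leftpt_eq_of_rightpt_mem_cyl hβ (hu.of_prefix (List.dropLast_prefix u))
    (hv.of_prefix (List.dropLast_prefix v)) (by simp [hl]) hmem, hr, hcons]

theorem not_isFull_dropLast (hβ : 1 < β) {w : List ℤ} (hw : Adm β w) (hw₀ : w ≠ [])
    (hfull : ¬IsFull β w) (hleft : leftpt β w.dropLast = leftpt β w) :
    ¬IsFull β w.dropLast := by
  have hβ₀ : 0 < β := one_pos.trans hβ
  have hright := rightpt_dropLast hβ₀ hw hfull
  obtain ⟨u, a, rfl⟩ : ∃ u a, w = u ++ [a] := ⟨_, _, (List.dropLast_append_getLast hw₀).symm⟩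
  rw [List.dropLast_concat] at hleft hright ⊢
  have hcyl : cylLen β u = cylLen β (u ++ [a]) := by
    rw [rightpt, rightpt, hleft] at hright
    linarith
  have hle : cylLen β (u ++ [a]) ≤ (β ^ (u.length + 1))⁻¹ := by
    have := (rightpt_append hβ₀ hw).trans_le (min_le_right _ _)
    rw [rightpt] at this
    linarith
  have hlt : (β ^ (u.length + 1))⁻¹ < (β ^ u.length)⁻¹ :=
    (inv_lt_inv₀ (pow_pos hβ₀ _) (pow_pos hβ₀ _)).2 (pow_lt_pow_right₀ hβ (Nat.lt_succ_self _))
  rw [IsFull, hcyl]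
  exact (hle.trans_lt hlt).ne

end

theorem stmt6_general (β : ℝ) (hβ : 1 < β) (n : ℕ)
    (w : Fin (n + 1) → List ℤ) (hlen : ∀ i, (w i).length = n)
    (hadm : ∀ i, Adm β (w i))
    (hconsec : ∀ i : Fin n,
      leftpt β (w i.succ) = leftpt β (w i.castSucc) + cylLen β (w i.castSucc)) :
    ∃ i, IsFull β (w i) := by
  have hβ₀ : 0 < β := one_pos.trans hβ
  induction n with
  | zero => exact ⟨0, List.eq_nil_of_length_eq_zero (hlen 0) ▸ isFull_nil⟩
  | succ n ih =>
    by_contra! hfull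
    have hleft (i : Fin (n + 1)) : leftpt β (w i.succ).dropLast = leftpt β (w i.succ) :=
      leftpt_dropLast_of_consecutive hβ₀ (by rw [hlen, hlen]) (hadm _) (hadm _) (hfull _)
        (hconsec i)
    obtain ⟨j, hj⟩ := ih (fun j => (w j.succ).dropLast) (fun j => by simp [hlen])
      (fun j => (hadm _).of_prefix (List.dropLast_prefix _)) fun j => by
        change _ = rightpt β _
        rw [hleft j.succ, hconsec j.succ, Fin.succ_castSucc,
          rightpt_dropLast hβ₀ (hadm _) (hfull _)]
        rfl
    exact not_isFull_dropLast hβ (hadm _) (List.ne_nil_of_length_pos (by rw [hlen]; omega))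
      (hfull _) (hleft j) hj

theorem stmt6 (β : ℝ) (hβ : 1 < β) (n : ℕ) (hn : 1 ≤ n)
    (w : Fin (n + 1) → List ℤ) (hlen : ∀ i, (w i).length = n)
    (hadm : ∀ i, Adm β (w i))
    (hconsec : ∀ i : Fin n,
      leftpt β (w i.succ) = leftpt β (w i.castSucc) + cylLen β (w i.castSucc)) :
    ∃ i, IsFull β (w i) :=
  stmt6_general β hβ n w hlen hadm hconsec
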